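/- arXiv:1211.4949 — 6 statements merged into one kernel-verified Lean document; each statement's English description precedes it below -/
import Mathlib

section
/- For positive integers v₁, v₂, v₃, the system v₁+v₂+v₃ ≥ 4, v₁+v₂ < 4, v₁+v₃ < 4, v₂+v₃ < 4 is solvable if and only if the Boolean clause c = {u₁,u₂,u₃} is 1-in-3 satisfiable, under the correspondence uᵢ = true ↔ vᵢ = 2 and uᵢ = false ↔ vᵢ = 1. -/
def exactlyOne (b₁ b₂ b₃ : Bool) : Prop :=
  (b₁ = true ∧ b₂ = false ∧ b₃ = false) ∨
  (b₁ = false ∧ b₂ = true ∧ b₃ = false) ∨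
  (b₁ = false ∧ b₂ = false ∧ b₃ = true)

def enc (b : Bool) : ℤ := if b then 2 else 1

theorem clause_gadget_encodes_one_in_three :
    ((∃ v₁ v₂ v₃ : ℤ, 1 ≤ v₁ ∧ 1 ≤ v₂ ∧ 1 ≤ v₃ ∧
        v₁ + v₂ + v₃ ≥ 4 ∧ v₁ + v₂ < 4 ∧ v₁ + v₃ < 4 ∧ v₂ + v₃ < 4) ↔
      (∃ b₁ b₂ b₃ : Bool, exactlyOne b₁ b₂ b₃)) ∧
    (∀ v₁ v₂ v₃ : ℤ,
      (1 ≤ v₁ ∧ 1 ≤ v₂ ∧ 1 ≤ v₃ ∧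
        v₁ + v₂ + v₃ ≥ 4 ∧ v₁ + v₂ < 4 ∧ v₁ + v₃ < 4 ∧ v₂ + v₃ < 4) ↔
      (∃ b₁ b₂ b₃ : Bool, exactlyOne b₁ b₂ b₃ ∧
        v₁ = enc b₁ ∧ v₂ = enc b₂ ∧ v₃ = enc b₃)) := by
  have key : ∀ v₁ v₂ v₃ : ℤ,
      (1 ≤ v₁ ∧ 1 ≤ v₂ ∧ 1 ≤ v₃ ∧
        v₁ + v₂ + v₃ ≥ 4 ∧ v₁ + v₂ < 4 ∧ v₁ + v₃ < 4 ∧ v₂ + v₃ < 4) ↔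
      (∃ b₁ b₂ b₃ : Bool, exactlyOne b₁ b₂ b₃ ∧
        v₁ = enc b₁ ∧ v₂ = enc b₂ ∧ v₃ = enc b₃) := by
    intro v₁ v₂ v₃
    constructor
    · rintro ⟨h1, h2, h3, h4, h5, h6, h7⟩
      have u1 : v₁ ≤ 2 := by omega
      have u2 : v₂ ≤ 2 := by omega
      have u3 : v₃ ≤ 2 := by omega
      interval_cases v₁ <;> interval_cases v₂ <;> interval_cases v₃ <;>
        first
        | exact ⟨false, false, true, Or.inr (Or.inr ⟨rfl, rfl, rfl⟩), rfl, rfl, rfl⟩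
        | exact ⟨false, true, false, Or.inr (Or.inl ⟨rfl, rfl, rfl⟩), rfl, rfl, rfl⟩
        | exact ⟨true, false, false, Or.inl ⟨rfl, rfl, rfl⟩, rfl, rfl, rfl⟩
        | omega
    · rintro ⟨b₁, b₂, b₃, (⟨rfl, rfl, rfl⟩ | ⟨rfl, rfl, rfl⟩ | ⟨rfl, rfl, rfl⟩), rfl, rfl, rfl⟩ <;>
        simp [enc] <;> omega
  refine ⟨?_, key⟩
  constructor
  · rintro ⟨v₁, v₂, v₃, h⟩
    obtain ⟨b₁, b₂, b₃, hb, -⟩ := (key v₁ v₂ v₃).1 h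
    exact ⟨b₁, b₂, b₃, hb⟩
  · rintro -
    exact ⟨2, 1, 1, by norm_num⟩
end

section
/- For every integer n ≥ 1 and every integer τ ≥ n + 2^{i+1} + 1, the 2^{i+1}-adder system (4) with the additional constraint A_i ≥ n is solvable in positive integers; an explicit solution is A_i = n, x₀ = A₁ = ⋯ = A_{i−1} = 1, A_k' = 2^k, B_k' = τ − A_k' − 1, A_k'' = 2^{k+1} − 1, B_k'' = τ − A_k'' − 1 for 1 ≤ k < i, A_i' = n + 2^i − 1, B_i' = τ − A_i' − 1, A_i'' = n + 2^{i+1} − 2, B_i'' = τ − A_i'' − 1, z₁ = n + 2^{i+1} − 1, z₂ = n + 2^{i+1}, x_b = τ − (n + 2^{i+1} − 1), x_c = τ − (n + 2^{i+1}). -/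
/-- The value of `A_k` in the explicit solution of the `2^(i+1)`-adder. -/
def solA (i : ℕ) (n : ℤ) (k : ℕ) : ℤ := if k = i then n else 1

/-- The value of `A_k'` in the explicit solution. -/
def solA' (i : ℕ) (n : ℤ) (k : ℕ) : ℤ :=
  if k = i then n + 2 ^ i - 1 else 2 ^ k

/-- The value of `A_k''` in the explicit solution. -/
def solA'' (i : ℕ) (n : ℤ) (k : ℕ) : ℤ :=
  if k = i then n + 2 ^ (i + 1) - 2 else 2 ^ (k + 1) - 1

/-- The value of `B_k'` in the explicit solution. -/
def solB' (i : ℕ) (n τ : ℤ) (k : ℕ) : ℤ := τ - solA' i n k - 1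

/-- The value of `B_k''` in the explicit solution. -/
def solB'' (i : ℕ) (n τ : ℤ) (k : ℕ) : ℤ := τ - solA'' i n k - 1

theorem adder_explicit_solution (i : ℕ) (hi : 1 ≤ i) (n τ : ℤ)
    (hn : 1 ≤ n) (hτ : n + 2 ^ (i + 1) + 1 ≤ τ) :
    -- abbreviations for the remaining variables
    (∀ x₀ z₁ z₂ xb xc : ℤ,
      x₀ = 1 → z₁ = n + 2 ^ (i + 1) - 1 → z₂ = n + 2 ^ (i + 1) →
      xb = τ - (n + 2 ^ (i + 1) - 1) → xc = τ - (n + 2 ^ (i + 1)) →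
      -- all variables are positive integers
      (∀ k, 1 ≤ k → k ≤ i →
        1 ≤ solA i n k ∧ 1 ≤ solA' i n k ∧ 1 ≤ solA'' i n k ∧
        1 ≤ solB' i n τ k ∧ 1 ≤ solB'' i n τ k) ∧
      1 ≤ x₀ ∧ 1 ≤ z₁ ∧ 1 ≤ z₂ ∧ 1 ≤ xb ∧ 1 ≤ xc ∧
      -- the lower-bound constraint on A_i
      solA i n i ≥ n ∧
      -- stage-1 inequalities
      solA' i n 1 + solB' i n τ 1 + x₀ ≥ τ ∧
      solA'' i n 1 + solB'' i n τ 1 + x₀ ≥ τ ∧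
      solA i n 1 + solB' i n τ 1 + x₀ < τ ∧
      solA' i n 1 + solB'' i n τ 1 + x₀ < τ ∧
      -- stage-j inequalities for 2 ≤ j ≤ i
      (∀ j, 2 ≤ j → j ≤ i →
        solA i n (j - 1) + solB' i n τ j + solA' i n j ≥ τ ∧
        solA i n (j - 1) + solB'' i n τ j + solA'' i n j ≥ τ ∧
        solA'' i n (j - 1) + solB' i n τ j + solA i n j < τ ∧
        solA' i n j + solB'' i n τ j + solA'' i n (j - 1) < τ) ∧
      -- final (output) inequalities
      solA'' i n i + xb < τ ∧ z₁ + xc < τ ∧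
      z₁ + xb ≥ τ ∧ z₂ + xc ≥ τ) := by
  intro x₀ z₁ z₂ xb xc hx₀ hz₁ hz₂ hxb hxc
  subst hx₀ hz₁ hz₂ hxb hxc
  have h2i : (0:ℤ) < 2 ^ i := pow_pos (by norm_num) i
  have h2i1 : (2:ℤ) ^ (i + 1) = 2 * 2 ^ i := by ring
  refine ⟨?_, by omega, by omega, by omega, by omega, by omega, ?_, ?_, ?_, ?_, ?_, ?_, ?_, ?_, ?_, ?_⟩
  · intro k hk1 hki
    by_cases hk : k = i
    · simp only [solA, solA', solA'', solB', solB'', hk, if_pos rfl]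
      omega
    · have hklt : k < i := lt_of_le_of_ne hki hk
      have hle : (2:ℤ) ^ (k + 1) ≤ 2 ^ i := pow_le_pow_right₀ (by norm_num) (by omega)
      have hle1 : (0:ℤ) < 2 ^ k := pow_pos (by norm_num) k
      have hle2 : (2:ℤ) ^ (k+1) = 2 * 2 ^ k := by ring
      simp only [solA, solA', solA'', solB', solB'', if_neg hk]
      omega
  · simp [solA]
  · simp only [solA', solB']; omega
  · simp only [solA'', solB'']; omega
  · by_cases hi1 : 1 = i
    · subst hi1; simp [solA, solA', solB']; omega
    · simp only [solA, solA', solB', if_neg hi1]; omega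
  · by_cases hi1 : 1 = i
    · subst hi1; simp [solA', solA'', solB'']; omega
    · simp only [solA', solA'', solB'', if_neg hi1]; omega
  · intro j hj2 hji
    obtain ⟨m, rfl⟩ : ∃ m, j = m + 1 := ⟨j - 1, by omega⟩
    have hm : m + 1 - 1 = m := by omega
    have hmne : m ≠ i := by omega
    have hle : (2:ℤ) ^ (m + 1) ≤ 2 ^ i := pow_le_pow_right₀ (by norm_num) (by omega)
    have h2m : (2:ℤ) ^ (m + 1) = 2 * 2 ^ m := by ring
    have h1m : (0:ℤ) < 2 ^ m := pow_pos (by norm_num) m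
    by_cases hj : m + 1 = i
    · simp only [solA, solA', solA'', solB', solB'', hm, if_neg hmne, if_pos hj]
      rw [← hj]
      refine ⟨by omega, by omega, by omega, by omega⟩
    · have hle2 : (2:ℤ) ^ (m + 1 + 1) ≤ 2 ^ i := pow_le_pow_right₀ (by norm_num) (by omega)
      have h2m2 : (2:ℤ) ^ (m + 1 + 1) = 2 * 2 ^ (m+1) := by ring
      simp only [solA, solA', solA'', solB', solB'', hm, if_neg hmne, if_neg hj]
      omega
  · simp only [solA'', if_pos rfl]; omega
  · omega
  · omega
  · omega
end

section
/- The conversion {α, β, γ} ↦ {¬α, h, k}{¬β, i, k}{¬γ, j, k}{h, i, j} preserves 1-in-3 satisfiability: for Booleans α, β, γ, exactly one of α, β, γ is true if and only if there exist Booleans h, i, j, k such that each of the four clauses {¬α, h, k}, {¬β, i, k}, {¬γ, j, k}, {h, i, j} contains exactly one true literal. -/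
theorem clause_conversion_preserves_1in3 (α β γ : Bool) :
    exactlyOne α β γ ↔
    ∃ h i j k : Bool,
      exactlyOne (!α) h k ∧ exactlyOne (!β) i k ∧
      exactlyOne (!γ) j k ∧ exactlyOne h i j := by
  constructor
  · rintro (⟨h1,h2,h3⟩|⟨h1,h2,h3⟩|⟨h1,h2,h3⟩) <;> subst h1 <;> subst h2 <;> subst h3
    · exact ⟨true, false, false, false, by simp [exactlyOne]⟩
    · exact ⟨false, true, false, false, by simp [exactlyOne]⟩
    · exact ⟨false, false, true, false, by simp [exactlyOne]⟩
  · rintro ⟨h, i, j, k, c⟩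
    revert c
    cases α <;> cases β <;> cases γ <;> cases h <;> cases i <;> cases j <;> cases k <;>
      simp [exactlyOne]
end

section
/- For Booleans x, y, z: exactly one of x, y, z is true if and only if there exist Booleans a₁,a₂,a₃,b₁,b₂,b₃,c,d_x,d_y,d_z,e_{xy},e_{yz},e_{zx},f_{xy},f_{yz},f_{zx} such that each of the 13 clauses {¬x,a₁,b₁}, {¬y,a₂,b₂}, {¬z,a₃,b₃}, {a₁,a₂,a₃}, {¬x,c,d_x}, {¬y,c,d_y}, {¬z,c,d_z}, {c,e_{xy},f_{xy}}, {c,e_{yz},f_{yz}}, {c,e_{zx},f_{zx}}, {d_x,d_y,e_{xy}}, {d_y,d_z,e_{yz}}, {d_z,d_x,e_{zx}} contains exactly one true literal. -/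
theorem thirteen_clause_gadget (x y z : Bool) :
    exactlyOne x y z ↔
    ∃ a₁ a₂ a₃ b₁ b₂ b₃ c dx dy dz exy eyz ezx fxy fyz fzx : Bool,
      exactlyOne (!x) a₁ b₁ ∧ exactlyOne (!y) a₂ b₂ ∧ exactlyOne (!z) a₃ b₃ ∧
      exactlyOne a₁ a₂ a₃ ∧
      exactlyOne (!x) c dx ∧ exactlyOne (!y) c dy ∧ exactlyOne (!z) c dz ∧
      exactlyOne c exy fxy ∧ exactlyOne c eyz fyz ∧ exactlyOne c ezx fzx ∧
      exactlyOne dx dy exy ∧ exactlyOne dy dz eyz ∧ exactlyOne dz dx ezx := by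
  constructor
  · rintro (⟨hx, hy, hz⟩ | ⟨hx, hy, hz⟩ | ⟨hx, hy, hz⟩) <;> subst hx <;> subst hy <;> subst hz
    · exact ⟨true, false, false, false, false, false, false, true, false, false,
        false, true, false, true, false, true, by simp [exactlyOne]⟩
    · exact ⟨false, true, false, false, false, false, false, false, true, false,
        false, false, true, true, true, false, by simp [exactlyOne]⟩
    · exact ⟨false, false, true, false, false, false, false, false, false, true,
        true, false, false, false, true, true, by simp [exactlyOne]⟩
  · rintro ⟨a₁, a₂, a₃, b₁, b₂, b₃, c, dx, dy, dz, exy, eyz, ezx, fxy, fyz, fzx,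
      h1, h2, h3, h4, h5, h6, h7, h8, h9, h10, h11, h12, h13⟩
    cases x <;> cases y <;> cases z <;> cases c <;>
      simp_all [exactlyOne]
end

section
/- In the 13-clause gadget (5), if x = y = z = false then the conjunction is not 1-in-3 satisfiable: the first three clauses force a₁ = a₂ = a₃ = false (since ¬x is already true, a₁ and b₁ must both be false, and likewise for a₂, b₂ and a₃, b₃), contradicting the clause {a₁,a₂,a₃}. -/
theorem gadget_unsat_all_false (x y z : Bool)
    (hx : x = false) (hy : y = false) (hz : z = false) :
    ¬ ∃ a₁ a₂ a₃ b₁ b₂ b₃ c dx dy dz exy eyz ezx fxy fyz fzx : Bool,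
      exactlyOne (!x) a₁ b₁ ∧ exactlyOne (!y) a₂ b₂ ∧ exactlyOne (!z) a₃ b₃ ∧
      exactlyOne a₁ a₂ a₃ ∧
      exactlyOne (!x) c dx ∧ exactlyOne (!y) c dy ∧ exactlyOne (!z) c dz ∧
      exactlyOne c exy fxy ∧ exactlyOne c eyz fyz ∧ exactlyOne c ezx fzx ∧
      exactlyOne dx dy exy ∧ exactlyOne dy dz eyz ∧ exactlyOne dz dx ezx := by
  subst hx hy hz
  rintro ⟨a₁,a₂,a₃,b₁,b₂,b₃,c,dx,dy,dz,exy,eyz,ezx,fxy,fyz,fzx,h⟩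
  simp only [exactlyOne] at h
  rcases h with ⟨h1,h2,h3,h4,_⟩
  rcases h1 with ⟨_,ha1,_⟩|⟨h,_⟩|⟨h,_⟩ <;>
  rcases h2 with ⟨_,ha2,_⟩|⟨h',_⟩|⟨h',_⟩ <;>
  rcases h3 with ⟨_,ha3,_⟩|⟨h'',_⟩|⟨h'',_⟩ <;>
  subst_vars <;> simp_all
end

section
/- In the 13-clause gadget (5), if at least two of x, y, z are true (say x = y = true), then the conjunction is not 1-in-3 satisfiable: case c = false forces d_x = d_y = true, violating {d_x,d_y,e_{xy}}; case c = true forces d_x = d_y = e_{xy} = false, so {d_x,d_y,e_{xy}} has no true literal. -/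
theorem gadget_unsat_two_true (x y z : Bool)
    (hx : x = true) (hy : y = true) :
    ¬ ∃ a₁ a₂ a₃ b₁ b₂ b₃ c dx dy dz exy eyz ezx fxy fyz fzx : Bool,
      exactlyOne (!x) a₁ b₁ ∧ exactlyOne (!y) a₂ b₂ ∧ exactlyOne (!z) a₃ b₃ ∧
      exactlyOne a₁ a₂ a₃ ∧
      exactlyOne (!x) c dx ∧ exactlyOne (!y) c dy ∧ exactlyOne (!z) c dz ∧
      exactlyOne c exy fxy ∧ exactlyOne c eyz fyz ∧ exactlyOne c ezx fzx ∧
      exactlyOne dx dy exy ∧ exactlyOne dy dz eyz ∧ exactlyOne dz dx ezx := by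
  subst hx hy
  rintro ⟨a₁,a₂,a₃,b₁,b₂,b₃,c,dx,dy,dz,exy,eyz,ezx,fxy,fyz,fzx,
    h1,h2,h3,h4,h5,h6,h7,h8,h9,h10,h11,h12,h13⟩
  simp only [exactlyOne] at h5 h6 h8 h11
  cases c <;> simp_all
end
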